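/- arXiv:1506.02234 — 2 statements merged into one kernel-verified Lean document; each statement's English description precedes it below -/
import Mathlib

section
/- The group H(n,m;t,r) has order n·m; moreover the cyclic subgroup generated by a has order n and is normal in H, with quotient H/⟨a⟩ cyclic of order m. -/
/-- The relations of the metacyclic group
`H(n,m;t,r) = ⟨a, b ∣ aⁿ = e, bᵐ = aᵗ, b a b⁻¹ = aʳ⟩`,
where the generator `a` is indexed by `0 : Fin 2` and `b` by `1 : Fin 2`. -/
def metaRels (n m t r : ℕ) : Set (FreeGroup (Fin 2)) :=
  {FreeGroup.of 0 ^ n,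
   FreeGroup.of 1 ^ m * (FreeGroup.of 0 ^ t)⁻¹,
   FreeGroup.of 1 * FreeGroup.of 0 * (FreeGroup.of 1)⁻¹ * (FreeGroup.of 0 ^ r)⁻¹}

/-- The metacyclic group `H(n,m;t,r)`. -/
abbrev MetaGroup (n m t r : ℕ) : Type := PresentedGroup (metaRels n m t r)

/-- The generator `a` of `H(n,m;t,r)`. -/
def gena (n m t r : ℕ) : MetaGroup n m t r := PresentedGroup.of 0

/-- The generator `b` of `H(n,m;t,r)`. -/
def genb (n m t r : ℕ) : MetaGroup n m t r := PresentedGroup.of 1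

/-! `⟨a⟩` is normal: conjugation by `b` sends `a` to `aʳ`, and since `r ^ m ≡ 1 [MOD n]`,
conjugation by `b⁻¹` sends `a` to `a ^ r ^ (m - 1)`. The quotient is generated by the image of
`b`, whose `m`-th power `aᵗ` dies, so `|⟨a⟩| ≤ n`, `|H ⧸ ⟨a⟩| ≤ m` and `|H| ≤ n m`.
Conversely, `H` acts on `ZMod n × ZMod m` (the left-regular action written on normal forms
`aˣ bᵏ`) by `a : (x, k) ↦ (x + 1, k)` and `b : (x, k) ↦ (r x + [k = -1] t, k + 1)`; this action
is transitive, so `|H| ≥ n m`, and all three bounds are equalities. -/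

open Subgroup

theorem orderOf_pos_and_le_of_pow_eq_one {G : Type*} [Monoid G] {x : G} {k : ℕ} (hk : 0 < k)
    (h : x ^ k = 1) : 0 < orderOf x ∧ orderOf x ≤ k :=
  ⟨(isOfFinOrder_iff_pow_eq_one.2 ⟨k, hk, h⟩).orderOf_pos, orderOf_le_of_pow_eq_one hk h⟩

theorem Subgroup.mem_normalizer_zpowers {G : Type*} [Group G] {g x : G} {k l : ℕ}
    (h₁ : g * x * g⁻¹ = x ^ k) (h₂ : g⁻¹ * x * g = x ^ l) :
    g ∈ normalizer (zpowers x : Set G) := by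
  have conj_mem (c : G) (j : ℕ) (hc : c * x * c⁻¹ = x ^ j) :
      ∀ y ∈ zpowers x, c * y * c⁻¹ ∈ zpowers x := by
    rintro _ ⟨i, rfl⟩
    rw [← conj_zpow, hc]
    exact zpow_mem (pow_mem (mem_zpowers x) j) i
  refine mem_normalizer_iff.2 fun y => ⟨conj_mem g k h₁ y, fun hy => ?_⟩
  simpa [mul_assoc] using conj_mem g⁻¹ l (by simpa using h₂) _ hy

namespace MetaGroup

variable {n m t r : ℕ}

local notation "𝐚" => gena n m t r
local notation "𝐛" => genb n m t r

lemma gena_pow_n : 𝐚 ^ n = 1 := by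
  simpa [gena, PresentedGroup.of] using
    PresentedGroup.one_of_mem (rels := metaRels n m t r) (Or.inl rfl)

lemma genb_pow_m : 𝐛 ^ m = 𝐚 ^ t := by
  have h := PresentedGroup.one_of_mem (rels := metaRels n m t r) (Or.inr (Or.inl rfl))
  simpa [gena, genb, PresentedGroup.of, mul_inv_eq_one] using h

lemma genb_mul_gena_mul_inv : 𝐛 * 𝐚 * 𝐛⁻¹ = 𝐚 ^ r := by
  have h := PresentedGroup.one_of_mem (rels := metaRels n m t r) (Or.inr (Or.inr rfl))
  simpa [gena, genb, PresentedGroup.of, mul_inv_eq_one] using h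

lemma gena_pow_eq_pow_of_modEq {x y : ℕ} (h : x ≡ y [MOD n]) : 𝐚 ^ x = 𝐚 ^ y :=
  pow_eq_pow_iff_modEq.2 (h.of_dvd (orderOf_dvd_of_pow_eq_one gena_pow_n))

lemma inv_genb_mul_gena_mul (hm : 0 < m) (hrm : r ^ m ≡ 1 [MOD n]) :
    𝐛⁻¹ * 𝐚 * 𝐛 = 𝐚 ^ r ^ (m - 1) := by
  have h : 𝐛 * 𝐚 ^ r ^ (m - 1) * 𝐛⁻¹ = 𝐚 := by
    rw [← conj_pow, genb_mul_gena_mul_inv, ← pow_mul, ← pow_succ', Nat.sub_add_cancel hm,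
      gena_pow_eq_pow_of_modEq hrm, pow_one]
  conv_lhs => rw [← h]
  simp [mul_assoc]

lemma zpowers_gena_normal (hm : 0 < m) (hrm : r ^ m ≡ 1 [MOD n]) : (zpowers 𝐚).Normal := by
  refine normalizer_eq_top_iff.1 <| eq_top_iff.2 fun h _ =>
    PresentedGroup.generated_by _ _ (fun j => ?_) h
  fin_cases j
  · exact le_normalizer (mem_zpowers _)
  · exact mem_normalizer_zpowers genb_mul_gena_mul_inv (inv_genb_mul_gena_mul hm hrm)

section Quotient

variable [(zpowers (gena n m t r)).Normal]

lemma mk_genb_pow_m : (𝐛 : MetaGroup n m t r ⧸ zpowers 𝐚) ^ m = 1 := by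
  rw [← QuotientGroup.mk_pow, genb_pow_m, QuotientGroup.eq_one_iff]
  exact pow_mem (mem_zpowers _) t

lemma mem_zpowers_mk_genb (q : MetaGroup n m t r ⧸ zpowers 𝐚) :
    q ∈ zpowers (𝐛 : MetaGroup n m t r ⧸ zpowers 𝐚) := by
  induction q using QuotientGroup.induction_on with | H h => ?_
  refine PresentedGroup.generated_by _ ((zpowers _).comap (QuotientGroup.mk' _)) (fun j => ?_) h
  fin_cases j
  · rw [mem_comap]
    convert one_mem (zpowers (𝐛 : MetaGroup n m t r ⧸ zpowers 𝐚))
    exact (QuotientGroup.eq_one_iff 𝐚).2 (mem_zpowers 𝐚)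
  · exact mem_zpowers _

lemma card_quotient_eq_orderOf :
    Nat.card (MetaGroup n m t r ⧸ zpowers 𝐚) = orderOf (𝐛 : MetaGroup n m t r ⧸ zpowers 𝐚) :=
  (orderOf_eq_card_of_forall_mem_zpowers mem_zpowers_mk_genb).symm

end Quotient

section Action

def carry (c : ZMod n) (k : ZMod m) : ZMod n := if k + 1 = 0 then c else 0

lemma carry_add_natCast [NeZero m] (c : ZMod n) (k : ZMod m) (j : ℕ) :
    carry c (k + (j : ZMod m)) = if m ∣ k.val + j + 1 then c else 0 := by
  have : k + (j : ZMod m) + 1 = ((k.val + j + 1 : ℕ) : ZMod m) := by simp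
  simp only [carry, this, ZMod.natCast_eq_zero_iff]

def permA : Equiv.Perm (ZMod n × ZMod m) := Equiv.addRight (1, 0)

lemma permA_pow_apply (j : ℕ) (x : ZMod n) (k : ZMod m) : (permA ^ j) (x, k) = (x + j, k) := by
  simp [permA]

lemma permA_pow_n : (permA : Equiv.Perm (ZMod n × ZMod m)) ^ n = 1 := by
  ext ⟨x, k⟩ <;> simp [permA_pow_apply]

def permB (u : (ZMod n)ˣ) (c : ZMod n) : Equiv.Perm (ZMod n × ZMod m) where
  toFun p := (u * p.1 + carry c p.2, p.2 + 1)
  invFun p := (u⁻¹ * (p.1 - carry c (p.2 - 1)), p.2 - 1)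
  left_inv p := by simp
  right_inv p := by simp

variable {u : (ZMod n)ˣ} {c : ZMod n}

lemma permB_apply (x : ZMod n) (k : ZMod m) : permB u c (x, k) = (u * x + carry c k, k + 1) :=
  rfl

lemma permB_pow_apply [NeZero m] (huc : (u : ZMod n) * c = c) (j : ℕ) (x : ZMod n)
    (k : ZMod m) :
    (permB u c ^ j) (x, k) =
      ((u : ZMod n) ^ j * x + c * ((k.val + j) / m : ℕ), k + (j : ZMod m)) := by
  induction j with
  | zero => simp [Nat.div_eq_of_lt (ZMod.val_lt k)]
  | succ j ih =>
    rw [pow_succ', Equiv.Perm.mul_apply, ih, permB_apply, carry_add_natCast, ← add_assoc,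
      Nat.succ_div]
    have hc : (u : ZMod n) * (c * ((k.val + j) / m : ℕ)) = c * ((k.val + j) / m : ℕ) := by
      rw [← mul_assoc, huc]
    split_ifs <;> refine Prod.ext ?_ (by push_cast; ring) <;> push_cast <;> linear_combination hc

lemma permB_pow_m [NeZero m] (hu : u ^ m = 1) (hut : (u : ZMod n) * t = t) :
    permB u t ^ m = (permA : Equiv.Perm (ZMod n × ZMod m)) ^ t := by
  ext ⟨x, k⟩
  · rw [permB_pow_apply hut, permA_pow_apply, Nat.add_div_right _ (NeZero.pos m),
      Nat.div_eq_of_lt (ZMod.val_lt k), ← Units.val_pow_eq_pow_val, hu]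
    simp
  · simp [permB_pow_apply hut, permA_pow_apply]

lemma permB_mul_permA_mul_inv (hur : (u : ZMod n) = r) :
    permB u c * permA * (permB u c)⁻¹ = (permA : Equiv.Perm (ZMod n × ZMod m)) ^ r := by
  rw [mul_inv_eq_iff_eq_mul]
  ext ⟨x, k⟩
  · simp [permB_apply, permA, hur]
    ring
  · simp [permB_apply, permA]

end Action

section Lift

variable {G : Type*} [Group G] (x y : G) (hx : x ^ n = 1) (hy : y ^ m = x ^ t)
  (hyx : y * x * y⁻¹ = x ^ r)

def lift : MetaGroup n m t r →* G :=
  PresentedGroup.toGroup (f := ![x, y]) <| by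
    rintro w (rfl | rfl | rfl) <;> simp [hx, hy, hyx]

@[simp] lemma lift_gena : lift x y hx hy hyx (gena n m t r) = x := PresentedGroup.toGroup.of _

@[simp] lemma lift_genb : lift x y hx hy hyx (genb n m t r) = y := PresentedGroup.toGroup.of _

end Lift

lemma mul_le_card [Finite (MetaGroup n m t r)] (hn : 0 < n) (hm : 0 < m)
    (hrm : r ^ m ≡ 1 [MOD n]) (htr : t * r ≡ t [MOD n]) : n * m ≤ Nat.card (MetaGroup n m t r) := by
  have : NeZero n := ⟨hn.ne'⟩
  have : NeZero m := ⟨hm.ne'⟩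
  have hu : (r : ZMod n) ^ m = 1 := by exact_mod_cast (ZMod.natCast_eq_natCast_iff _ _ _).2 hrm
  have hut : (r : ZMod n) * t = t := by
    rw [mul_comm]; exact_mod_cast (ZMod.natCast_eq_natCast_iff _ _ _).2 htr
  let u := Units.ofPowEqOne _ m hu hm.ne'
  let ψ : MetaGroup n m t r →* Equiv.Perm (ZMod n × ZMod m) :=
    lift permA (permB u t) permA_pow_n (permB_pow_m (Units.pow_ofPowEqOne hu hm.ne') hut)
      (permB_mul_permA_mul_inv rfl)
  have hψ : Function.Surjective fun h => ψ h (0, 0) := by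
    rintro ⟨i, j⟩
    refine ⟨gena n m t r ^ i.val * genb n m t r ^ j.val, ?_⟩
    simp [ψ, permB_pow_apply (u := u) hut, permA_pow_apply, Nat.div_eq_of_lt (ZMod.val_lt j)]
  calc n * m = Nat.card (ZMod n × ZMod m) := by simp
    _ ≤ _ := Nat.card_le_card_of_surjective _ hψ

end MetaGroup

theorem stmt_7_general (n m t r : ℕ) (hn : 0 < n) (hm : 0 < m) (hr : 0 < r)
    (hrm : n ∣ r ^ m - 1) (htr : n ∣ t * (r - 1)) :
    Nat.card (MetaGroup n m t r) = n * m ∧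
    Nat.card (Subgroup.zpowers (gena n m t r)) = n ∧
    ∃ hN : (Subgroup.zpowers (gena n m t r)).Normal,
      letI := hN
      IsCyclic (MetaGroup n m t r ⧸ Subgroup.zpowers (gena n m t r)) ∧
      Nat.card (MetaGroup n m t r ⧸ Subgroup.zpowers (gena n m t r)) = m := by
  have hrm' : r ^ m ≡ 1 [MOD n] := ((Nat.modEq_iff_dvd' (Nat.one_le_pow _ _ hr)).2 hrm).symm
  have htr' : t * r ≡ t [MOD n] :=
    ((Nat.modEq_iff_dvd' (Nat.le_mul_of_pos_right t hr)).2 (by rwa [← Nat.mul_sub_one])).symm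
  have hN := MetaGroup.zpowers_gena_normal (t := t) hm hrm'
  set A := zpowers (gena n m t r)
  set Q := MetaGroup n m t r ⧸ A
  have hA : 0 < Nat.card A ∧ Nat.card A ≤ n := by
    rw [Nat.card_zpowers]
    exact orderOf_pos_and_le_of_pow_eq_one hn MetaGroup.gena_pow_n
  have hQ : 0 < Nat.card Q ∧ Nat.card Q ≤ m := by
    rw [MetaGroup.card_quotient_eq_orderOf]
    exact orderOf_pos_and_le_of_pow_eq_one hm MetaGroup.mk_genb_pow_m
  have hcard := card_eq_card_quotient_mul_card_subgroup A
  have : Finite (MetaGroup n m t r) :=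
    Nat.finite_of_card_ne_zero (by rw [hcard]; exact (Nat.mul_pos hQ.1 hA.1).ne')
  have hle := MetaGroup.mul_le_card hn hm hrm' htr'
  obtain ⟨hA', hQ'⟩ : Nat.card A = n ∧ Nat.card Q = m := by constructor <;> nlinarith
  exact ⟨by rw [hcard, hA', hQ', mul_comm], hA', hN, ⟨_, MetaGroup.mem_zpowers_mk_genb⟩, hQ'⟩

theorem stmt_7 (n m t r : ℕ) (hn : 0 < n) (hm : 0 < m) (ht : 0 < t) (hr : 0 < r)
    (hrm : n ∣ r ^ m - 1) (htr : n ∣ t * (r - 1)) :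
    Nat.card (MetaGroup n m t r) = n * m ∧
    Nat.card (Subgroup.zpowers (gena n m t r)) = n ∧
    ∃ hN : (Subgroup.zpowers (gena n m t r)).Normal,
      letI := hN
      IsCyclic (MetaGroup n m t r ⧸ Subgroup.zpowers (gena n m t r)) ∧
      Nat.card (MetaGroup n m t r ⧸ Subgroup.zpowers (gena n m t r)) = m :=
  stmt_7_general n m t r hn hm hr hrm htr
end

section
/- Assume 2 divides n and set α₂ = deg₂(n), β₂ = deg₂(m), γ₂ = deg₂(t), δ₂ = deg₂(r−1). Suppose δ₂ = γ₂ = 1, α₂ = 2 and β₂ > 1. Let x₁, x₂, y₁, y₂ be nonnegative integers with gcd(gcd(r−1,n), t)·y₁ ≡ 0 (mod m) and x₁y₂ − x₂y₁ odd. Then the two congruences x₂·[m]_{r^{y₂}} + t·y₂ − x₁·[t]_{r^{y₁}} − (t·y₁/m)·t ≡ 0 (mod 2^{α₂}) and (r^{y₁}−1)·x₂ + ([r]_{r^{y₁}} − r^{y₂})·x₁ + ((r−1)·y₁/m)·t ≡ 0 (mod 2^{α₂}) hold simultaneously if and only if 2^{β₂} divides y₁. -/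
/-!
Everything is decided modulo `4`. From `m ∣ gcd(r - 1, n, t) · y₁`, `4 ∣ m` and `4 ∤ t`, the
exponent `y₁` is even, so the oddness of `x₁y₂ - x₂y₁` makes `x₁` and `y₂` odd. As `r ≡ -1` and
`t ≡ 2 (mod 4)`, the geometric sums reduce to `[m]_{-1} = 0`, `[t]_1 = t` and `[r]_1 = r`, and
the two left-hand sides become `2·(t y₁ / m)` and `2·((r - 1) y₁ / m)` modulo `4`. Both quotients
have the form `2a·y₁ / (2^β₂ m')` with `a`, `m'` odd, so each is even exactly when `2^β₂ ∣ y₁`.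
-/

/-- The geometric sum `[k]_s = 1 + s + s^2 + ⋯ + s^(k-1)`, with `[0]_s = 0`. -/
def geomS (s : ℤ) (k : ℕ) : ℤ := ∑ i ∈ Finset.range k, s ^ i

lemma cast_geomS {R : Type*} [Ring R] (s : ℤ) (k : ℕ) :
    ((geomS s k : ℤ) : R) = ∑ i ∈ Finset.range k, (s : R) ^ i := by
  simp [geomS]

lemma exists_eq_two_pow_mul_odd {m k : ℕ} (h : 2 ^ k ∣ m) (h' : ¬ 2 ^ (k + 1) ∣ m) :
    ∃ m', Odd m' ∧ m = 2 ^ k * m' := by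
  obtain ⟨m', rfl⟩ := h
  refine ⟨m', Nat.not_even_iff_odd.mp ?_, rfl⟩
  rintro ⟨c, rfl⟩
  exact h' ⟨c, by ring⟩

lemma even_of_two_sq_dvd_mul {g y : ℕ} (hg : ¬ 2 ^ 2 ∣ g) (h : 2 ^ 2 ∣ g * y) : Even y := by
  by_contra hy
  have hcop : Nat.Coprime (2 ^ 2) y :=
    (Nat.coprime_two_left.mpr (Nat.not_even_iff_odd.mp hy)).pow_left 2
  exact hg (hcop.dvd_of_dvd_mul_right h)

lemma two_dvd_iff_two_pow_dvd_of_mul_eq {q a m' y β : ℕ} (ha : Odd a) (hm' : Odd m')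
    (hq : q * (2 ^ β * m') = 2 * a * y) : 2 ∣ q ↔ 2 ^ β ∣ y := by
  have hcop (k : ℕ) {b : ℕ} (hb : Odd b) : Nat.Coprime (2 ^ k) b :=
    (Nat.coprime_two_left.mpr hb).pow_left k
  calc 2 ∣ q ↔ 2 ^ (β + 1) ∣ q * 2 ^ β := by
        rw [pow_succ', Nat.mul_dvd_mul_iff_right (by positivity)]
    _ ↔ 2 ^ (β + 1) ∣ q * (2 ^ β * m') := by rw [← mul_assoc, (hcop _ hm').dvd_mul_right]
    _ ↔ 2 ^ (β + 1) ∣ 2 * y * a := by rw [hq, mul_right_comm]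
    _ ↔ 2 ^ β ∣ y := by
        rw [(hcop _ ha).dvd_mul_right, pow_succ', Nat.mul_dvd_mul_iff_left (by norm_num)]

lemma two_dvd_mul_div_iff {m t y β : ℕ} (hm : 2 ^ β ∣ m) (hm' : ¬ 2 ^ (β + 1) ∣ m)
    (ht : 2 ^ 1 ∣ t) (ht' : ¬ 2 ^ (1 + 1) ∣ t) (hmt : m ∣ t * y) :
    2 ∣ t * y / m ↔ 2 ^ β ∣ y := by
  have hq := Nat.div_mul_cancel hmt
  obtain ⟨m', hm'odd, rfl⟩ := exists_eq_two_pow_mul_odd hm hm'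
  obtain ⟨a, haodd, rfl⟩ := exists_eq_two_pow_mul_odd ht ht'
  exact two_dvd_iff_two_pow_dvd_of_mul_eq haodd hm'odd (by rw [hq, pow_one])

lemma Int.modEq_two_sq_zero_iff (a : ℤ) : a ≡ 0 [ZMOD 2 ^ 2] ↔ (a : ZMod 4) = 0 := by
  rw [Int.modEq_zero_iff_dvd, ZMod.intCast_zmod_eq_zero_iff_dvd]
  norm_num

namespace ZMod

lemma two_mul_natCast_eq_zero_iff (a : ℕ) : (2 * a : ZMod 4) = 0 ↔ 2 ∣ a := by
  have h := natCast_eq_zero_iff (2 * a) 4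
  push_cast at h
  rw [h]
  omega

lemma two_mul_natCast_of_odd {a : ℕ} (ha : Odd a) : (2 * a : ZMod 4) = 2 := by
  obtain ⟨k, rfl⟩ := ha
  have h4 : (4 : ZMod 4) = 0 := rfl
  push_cast
  linear_combination (k : ZMod 4) * h4

lemma natCast_eq_of_mod_four {a k : ℕ} (h : a % 4 = k) : (a : ZMod 4) = k := by
  rw [← natCast_mod, h]

end ZMod

section ModFour

variable {r t m x₁ x₂ y₁ y₂ : ℕ}

lemma cast_first_congruence (hr : (r : ZMod 4) = -1) (ht : (t : ZMod 4) = 2) (hm : Even m)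
    (hx₁ : Odd x₁) (hy₁ : Even y₁) (hy₂ : Odd y₂) (q : ℕ) :
    (((x₂ : ℤ) * geomS ((r : ℤ) ^ y₂) m + (t : ℤ) * (y₂ : ℤ)
        - (x₁ : ℤ) * geomS ((r : ℤ) ^ y₁) t - (q : ℤ) * (t : ℤ) : ℤ) : ZMod 4) = 2 * q := by
  push_cast [cast_geomS]
  rw [hr, hy₁.neg_one_pow, hy₂.neg_one_pow, neg_one_geom_sum, if_pos hm]
  simp only [one_pow, Finset.sum_const, Finset.card_range, nsmul_eq_mul, mul_one, ht]
  have h4 : (4 : ZMod 4) = 0 := rfl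
  linear_combination ZMod.two_mul_natCast_of_odd hy₂ - ZMod.two_mul_natCast_of_odd hx₁
    - (q : ZMod 4) * h4

lemma cast_second_congruence (hr : (r : ZMod 4) = -1) (ht : (t : ZMod 4) = 2)
    (hy₁ : Even y₁) (hy₂ : Odd y₂) (q : ℕ) :
    ((((r : ℤ) ^ y₁ - 1) * (x₂ : ℤ) + (geomS ((r : ℤ) ^ y₁) r - (r : ℤ) ^ y₂) * (x₁ : ℤ)
        + (q : ℤ) * (t : ℤ) : ℤ) : ZMod 4) = 2 * q := by
  push_cast [cast_geomS]
  simp only [hr, hy₁.neg_one_pow, hy₂.neg_one_pow, one_pow, Finset.sum_const, Finset.card_range,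
    nsmul_eq_mul, mul_one, ht]
  ring

end ModFour

theorem stmt_15_general (n m t r : ℕ)
    (α₂ β₂ γ₂ δ₂ : ℕ)
    (hβ1 : 2 ^ β₂ ∣ m) (hβ2 : ¬ 2 ^ (β₂ + 1) ∣ m)
    (hγ1 : 2 ^ γ₂ ∣ t) (hγ2 : ¬ 2 ^ (γ₂ + 1) ∣ t)
    (hδ1 : 2 ^ δ₂ ∣ (r - 1)) (hδ2 : ¬ 2 ^ (δ₂ + 1) ∣ (r - 1))
    (hδ : δ₂ = 1) (hγ : γ₂ = 1) (hα : α₂ = 2) (hβ : 1 < β₂)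
    (x₁ x₂ y₁ y₂ : ℕ)
    (hy : m ∣ Nat.gcd (Nat.gcd (r - 1) n) t * y₁)
    (hodd : ¬ (2 : ℤ) ∣ ((x₁ : ℤ) * (y₂ : ℤ) - (x₂ : ℤ) * (y₁ : ℤ))) :
    (((x₂ : ℤ) * geomS ((r : ℤ) ^ y₂) m + (t : ℤ) * (y₂ : ℤ)
          - (x₁ : ℤ) * geomS ((r : ℤ) ^ y₁) t
          - ((t * y₁ / m : ℕ) : ℤ) * (t : ℤ) ≡ 0 [ZMOD (2 : ℤ) ^ α₂]) ∧
     (((r : ℤ) ^ y₁ - 1) * (x₂ : ℤ)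
          + (geomS ((r : ℤ) ^ y₁) r - (r : ℤ) ^ y₂) * (x₁ : ℤ)
          + (((r - 1) * y₁ / m : ℕ) : ℤ) * (t : ℤ) ≡ 0 [ZMOD (2 : ℤ) ^ α₂])) ↔
    2 ^ β₂ ∣ y₁ := by
  subst hα hγ hδ
  have hm4 : 2 ^ 2 ∣ m := (pow_dvd_pow 2 hβ).trans hβ1
  have hm : Even m := even_iff_two_dvd.mpr ((dvd_pow_self 2 two_ne_zero).trans hm4)
  have hgt : Nat.gcd (Nat.gcd (r - 1) n) t ∣ t := Nat.gcd_dvd_right _ _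
  have hgr : Nat.gcd (Nat.gcd (r - 1) n) t ∣ r - 1 :=
    (Nat.gcd_dvd_left _ _).trans (Nat.gcd_dvd_left _ _)
  have hy₁ : Even y₁ := even_of_two_sq_dvd_mul (fun h => hγ2 (h.trans hgt)) (hm4.trans hy)
  obtain ⟨hx₁, hy₂⟩ : Odd x₁ ∧ Odd y₂ := by
    rw [← Nat.odd_mul, ← Int.odd_coe_nat, ← Int.not_even_iff_odd]
    rintro ⟨c, hc⟩
    obtain ⟨d, rfl⟩ := hy₁
    exact hodd ⟨c - x₂ * d, by push_cast at hc ⊢; linear_combination hc⟩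
  have hr : (r : ZMod 4) = -1 := ZMod.natCast_eq_of_mod_four (k := 3) (by omega)
  have ht : (t : ZMod 4) = 2 := ZMod.natCast_eq_of_mod_four (k := 2) (by omega)
  rw [Int.modEq_two_sq_zero_iff, Int.modEq_two_sq_zero_iff,
    cast_first_congruence hr ht hm hx₁ hy₁ hy₂,
    cast_second_congruence hr ht hy₁ hy₂, ZMod.two_mul_natCast_eq_zero_iff,
    ZMod.two_mul_natCast_eq_zero_iff,
    two_dvd_mul_div_iff hβ1 hβ2 hγ1 hγ2 (hy.trans (Nat.mul_dvd_mul_right hgt y₁)),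
    two_dvd_mul_div_iff hβ1 hβ2 hδ1 hδ2 (hy.trans (Nat.mul_dvd_mul_right hgr y₁)), and_self]

theorem stmt_15 (n m t r : ℕ) (hn : 0 < n) (hm : 0 < m) (ht : 0 < t) (hr : 0 < r)
    (htn : t ∣ n) (hrm : n ∣ r ^ m - 1) (htr : n ∣ t * (r - 1))
    (h2n : 2 ∣ n)
    (α₂ β₂ γ₂ δ₂ : ℕ)
    (hα1 : 2 ^ α₂ ∣ n) (hα2 : ¬ 2 ^ (α₂ + 1) ∣ n)
    (hβ1 : 2 ^ β₂ ∣ m) (hβ2 : ¬ 2 ^ (β₂ + 1) ∣ m)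
    (hγ1 : 2 ^ γ₂ ∣ t) (hγ2 : ¬ 2 ^ (γ₂ + 1) ∣ t)
    (hδ1 : 2 ^ δ₂ ∣ (r - 1)) (hδ2 : ¬ 2 ^ (δ₂ + 1) ∣ (r - 1))
    (hδ : δ₂ = 1) (hγ : γ₂ = 1) (hα : α₂ = 2) (hβ : 1 < β₂)
    (x₁ x₂ y₁ y₂ : ℕ)
    (hy : m ∣ Nat.gcd (Nat.gcd (r - 1) n) t * y₁)
    (hodd : ¬ (2 : ℤ) ∣ ((x₁ : ℤ) * (y₂ : ℤ) - (x₂ : ℤ) * (y₁ : ℤ))) :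
    (((x₂ : ℤ) * geomS ((r : ℤ) ^ y₂) m + (t : ℤ) * (y₂ : ℤ)
          - (x₁ : ℤ) * geomS ((r : ℤ) ^ y₁) t
          - ((t * y₁ / m : ℕ) : ℤ) * (t : ℤ) ≡ 0 [ZMOD (2 : ℤ) ^ α₂]) ∧
     (((r : ℤ) ^ y₁ - 1) * (x₂ : ℤ)
          + (geomS ((r : ℤ) ^ y₁) r - (r : ℤ) ^ y₂) * (x₁ : ℤ)
          + (((r - 1) * y₁ / m : ℕ) : ℤ) * (t : ℤ) ≡ 0 [ZMOD (2 : ℤ) ^ α₂])) ↔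
    2 ^ β₂ ∣ y₁ :=
  stmt_15_general n m t r α₂ β₂ γ₂ δ₂ hβ1 hβ2 hγ1 hγ2 hδ1 hδ2 hδ hγ hα hβ x₁ x₂ y₁ y₂ hy hodd
end
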